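/- arXiv:math/0210417 — 3 statements merged into one kernel-verified Lean document; each statement's English description precedes it below -/
import Mathlib

section
/- Let X be a projective scheme over an algebraically closed field k with s pairwise commuting invertible bimodules (L_i)_{σ_i}. Then the set {(σ_i^{-1})^*L_i with automorphism σ_i^{-1}}, i.e. {(L_i^{σ_i^{-1}})_{σ_i^{-1}}}, also commutes pairwise; moreover the set {(L_i)_{σ_i}} is right NC-ample if and only if the set {(L_i^{σ_i^{-1}})_{σ_i^{-1}}} is left NC-ample. -/
/-!
An axiomatization of the geometric data used in the paper
"Noncommutative ampleness for multiple divisors" (D. Keeler):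
a projective scheme `X` over an algebraically closed field `k`, encoded through
the commutative monoid of isomorphism classes of coherent sheaves under tensor
product, pullback along automorphisms, sheaf cohomology dimensions, global
sections, ampleness notions, and numerical classes of invertible sheaves.
-/

open scoped ENNReal TensorProduct

universe u

structure TwGeom (k : Type u) [Field k] : Type (u + 1) where
  /-- isomorphism classes of coherent sheaves on `X`; tensor product is the
  (commutative, associative up to isomorphism) monoid operation, with unit `O_X` -/
  Sh : Type u
  [instMon : CommMonoid Sh]
  /-- invertible sheaves (line bundles) -/
  Inv : Sh → Prop
  /-- automorphisms of the scheme `X` -/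
  Aut : Type u
  [instGrp : Group Aut]
  /-- pullback of sheaves along an automorphism; monoidal -/
  pull : Aut → Sh →* Sh
  pull_id : ∀ F : Sh, pull 1 F = F
  pull_comp : ∀ (a b : Aut) (F : Sh), pull (a * b) F = pull b (pull a F)
  /-- `hdim q F = dim_k H^q(X, F)` -/
  hdim : ℕ → Sh → ℕ
  hdim_pull : ∀ (q : ℕ) (a : Aut) (F : Sh), hdim q (pull a F) = hdim q F
  /-- the space of global sections `H^0(X, F)` -/
  H0 : Sh → Type u
  [instH0Add : ∀ F, AddCommGroup (H0 F)]
  [instH0Mod : ∀ F, Module k (H0 F)]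
  h0_findim : ∀ F, FiniteDimensional k (H0 F)
  h0_dim : ∀ F, Module.finrank k (H0 F) = hdim 0 F
  /-- multiplication (cup product) of global sections -/
  h0mul : ∀ F G : Sh, H0 F →ₗ[k] H0 G →ₗ[k] H0 (F * G)
  /-- pullback of global sections along an automorphism -/
  h0pull : ∀ (a : Aut) (F : Sh), H0 F ≃ₗ[k] H0 (pull a F)
  /-- ample invertible sheaf (commutative sense) -/
  ample : Sh → Prop
  /-- very ample invertible sheaf -/
  veryAmple : Sh → Prop
  /-- generated by global sections -/
  globGen : Sh → Prop
  veryAmple_ample : ∀ F, veryAmple F → ample F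
  ample_inv : ∀ F, ample F → Inv F
  /-- Serre vanishing for ample sheaves -/
  serre : ∀ A : Sh, ample A → ∀ F : Sh, ∃ n0 : ℕ, ∀ n ≥ n0, ∀ q, 0 < q → hdim q (F * A ^ n) = 0
  /-- projectivity of `X`: existence of an ample invertible sheaf -/
  projective : ∃ A : Sh, ample A
  /-- the dimension of the scheme `X` -/
  dimX : ℕ
  /-- the group `A^1_Num(X) = Pic X` modulo numerical equivalence:
  a finitely generated free abelian group -/
  Num : Type u
  [instNum : AddCommGroup Num]
  numFree : Module.Free ℤ Num
  numFinite : Module.Finite ℤ Num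
  /-- numerical class of an invertible sheaf -/
  toNum : Sh → Num
  /-- action of automorphisms (by pullback) on numerical classes -/
  numAct : Aut → Module.End ℤ Num
  numAct_one : numAct 1 = 1
  numAct_mul : ∀ a b : Aut, numAct (a * b) = numAct b * numAct a
  toNum_pull : ∀ (a : Aut) (F : Sh), toNum (pull a F) = numAct a (toNum F)

attribute [instance] TwGeom.instMon TwGeom.instGrp TwGeom.instH0Add TwGeom.instH0Mod
  TwGeom.instNum

namespace TwGeom

variable {k : Type u} [Field k]

/-- An automorphism `σ` of `X` is *quasi-unipotent* if all eigenvalues of its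
action on `A^1_Num(X)` are roots of unity; equivalently, some positive power of
the action is unipotent. -/
def qUnip (T : TwGeom k) (a : T.Aut) : Prop :=
  ∃ n : ℕ, 0 < n ∧ IsNilpotent (T.numAct a ^ n - 1)

/-- An invertible bimodule `L_σ`, recorded as the pair of (the class of) its
underlying sheaf and its automorphism. -/
abbrev Bimod (T : TwGeom k) : Type u := T.Sh × T.Aut

/-- Product of invertible bimodules: `L_σ ⊗ M_τ = (L ⊗ σ^* M)_{τσ}`. -/
def bmul (T : TwGeom k) (a b : T.Bimod) : T.Bimod :=
  (a.1 * T.pull a.2 b.1, b.2 * a.2)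

/-- The unit bimodule `(O_X)_{id}`. -/
def bone (T : TwGeom k) : T.Bimod := (1, 1)

/-- Powers of an invertible bimodule; `(L_σ)^n` has underlying sheaf
`L ⊗ σ^*L ⊗ ⋯ ⊗ (σ^{n-1})^* L`. -/
def bpow (T : TwGeom k) (a : T.Bimod) : ℕ → T.Bimod
  | 0 => T.bone
  | n + 1 => T.bmul a (T.bpow a n)

/-- Two bimodules commute: `L_σ M_τ = M_τ L_σ`, i.e. `L ⊗ σ^*M ≅ M ⊗ τ^*L`
and `στ = τσ`. -/
def bcomm (T : TwGeom k) (a b : T.Bimod) : Prop := T.bmul a b = T.bmul b a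

/-- The product bimodule `L_{(1,σ_1)}^{m_1} ⋯ L_{(s,σ_s)}^{m_s}`. -/
def bfam {s : ℕ} (T : TwGeom k) (L : Fin s → T.Sh) (σ : Fin s → T.Aut)
    (m : Fin s → ℕ) : T.Bimod :=
  (List.ofFn fun i => T.bpow (L i, σ i) (m i)).foldr T.bmul T.bone

/-- The sheaf `|L_{σ̄}^{m̄}|` underlying the product bimodule. -/
def Psh {s : ℕ} (T : TwGeom k) (L : Fin s → T.Sh) (σ : Fin s → T.Aut)
    (m : Fin s → ℕ) : T.Sh :=
  (T.bfam L σ m).1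

/-- The automorphism `σ^{m̄} = σ_1^{m_1} σ_2^{m_2} ⋯ σ_s^{m_s}`. -/
def autProd {s : ℕ} (T : TwGeom k) (σ : Fin s → T.Aut) (m : Fin s → ℕ) : T.Aut :=
  (List.ofFn fun i => σ i ^ m i).prod

/-- The sheaf `F ⊗ L_{σ̄}^{m̄}` (right action of the product bimodule on a
coherent sheaf `F`, including the final pushforward). -/
def rightTw {s : ℕ} (T : TwGeom k) (L : Fin s → T.Sh) (σ : Fin s → T.Aut)
    (F : T.Sh) (m : Fin s → ℕ) : T.Sh :=
  T.pull ((T.bfam L σ m).2)⁻¹ (F * T.Psh L σ m)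

/-- The sheaf `L_{σ̄}^{m̄} ⊗ F` (left action of the product bimodule on a
coherent sheaf `F`). -/
def leftTw {s : ℕ} (T : TwGeom k) (L : Fin s → T.Sh) (σ : Fin s → T.Aut)
    (F : T.Sh) (m : Fin s → ℕ) : T.Sh :=
  T.Psh L σ m * T.pull ((T.bfam L σ m).2) F

/-- Right NC-ampleness of a set of (commuting) invertible bimodules:
for every coherent `F`, `H^q(X, F ⊗ L_{σ̄}^{m̄}) = 0` for all `q > 0` and all
`m̄ ≥ m̄_0` (componentwise), for some `m̄_0`. -/
def RightNCAmple {s : ℕ} (T : TwGeom k) (L : Fin s → T.Sh) (σ : Fin s → T.Aut) : Prop :=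
  ∀ F : T.Sh, ∃ m0 : Fin s → ℕ, ∀ m : Fin s → ℕ, m0 ≤ m → ∀ q : ℕ, 0 < q →
    T.hdim q (T.rightTw L σ F m) = 0

/-- Left NC-ampleness of a set of (commuting) invertible bimodules. -/
def LeftNCAmple {s : ℕ} (T : TwGeom k) (L : Fin s → T.Sh) (σ : Fin s → T.Aut) : Prop :=
  ∀ F : T.Sh, ∃ m0 : Fin s → ℕ, ∀ m : Fin s → ℕ, m0 ≤ m → ∀ q : ℕ, 0 < q →
    T.hdim q (T.leftTw L σ F m) = 0

/-- `L` is `σ`-ample: for every coherent `F`,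
`H^q(X, F ⊗ L ⊗ σ^*L ⊗ ⋯ ⊗ (σ^{n-1})^*L) = 0` for `q > 0` and `n ≫ 0`. -/
def SigmaAmple (T : TwGeom k) (L : T.Sh) (σ : T.Aut) : Prop :=
  ∀ F : T.Sh, ∃ n0 : ℕ, ∀ n ≥ n0, ∀ q, 0 < q →
    T.hdim q (F * (T.bpow (L, σ) n).1) = 0

/-- The multiplication `H^0(L_{σ̄}^{m̄}) × H^0(L_{σ̄}^{n̄}) → H^0(L_{σ̄}^{m̄+n̄})`,
`a · b = a σ^{m̄}(b)`, given a system `g` of gluing isomorphisms. -/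
def twmul {s : ℕ} (T : TwGeom k) (L : Fin s → T.Sh) (σ : Fin s → T.Aut)
    (g : ∀ m n : Fin s → ℕ,
      T.H0 (T.Psh L σ m * T.pull (T.autProd σ m) (T.Psh L σ n)) ≃ₗ[k]
        T.H0 (T.Psh L σ (m + n)))
    (m n : Fin s → ℕ) (x : T.H0 (T.Psh L σ m)) (y : T.H0 (T.Psh L σ n)) :
    T.H0 (T.Psh L σ (m + n)) :=
  g m n (T.h0mul _ _ x ((T.h0pull (T.autProd σ m) (T.Psh L σ n)) y))

end TwGeom

/-- A coherent system of gluing isomorphisms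
`H^0(L_{σ̄}^{m̄} ⊗ σ^{m̄,*} L_{σ̄}^{n̄}) ≅ H^0(L_{σ̄}^{m̄+n̄})` whose induced twisted
multiplication is associative.  This is the section-level content of a choice of
pairwise commutation isomorphisms `φ_{ij}` that are compatible on overlaps in the
sense of Bergman's Diamond Lemma. -/
structure GlueData {k : Type u} [Field k] {s : ℕ} (T : TwGeom k)
    (L : Fin s → T.Sh) (σ : Fin s → T.Aut) : Type u where
  g : ∀ m n : Fin s → ℕ,
    T.H0 (T.Psh L σ m * T.pull (T.autProd σ m) (T.Psh L σ n)) ≃ₗ[k]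
      T.H0 (T.Psh L σ (m + n))
  assoc : ∀ (m n p : Fin s → ℕ) (x : T.H0 (T.Psh L σ m)) (y : T.H0 (T.Psh L σ n))
      (z : T.H0 (T.Psh L σ p)),
    T.twmul L σ g (m + n) p (T.twmul L σ g m n x y) z =
      cast (congrArg (fun q => T.H0 (T.Psh L σ q)) (add_assoc m n p).symm)
        (T.twmul L σ g m (n + p) x (T.twmul L σ g n p y z))

/-- `B` (with grading `𝒜`) is a twisted multi-homogeneous coordinate ring
`B(X; {L_{(i,σ_i)}})`: an `ℕ^s`-graded `k`-algebra whose graded piece of degree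
`n̄` is `H^0(X, L_{(1,σ_1)}^{n_1} ⋯ L_{(s,σ_s)}^{n_s})` and whose multiplication
is `a · b = a σ^{m̄}(b)`. -/
structure MTwRing {k : Type u} [Field k] {s : ℕ} (T : TwGeom k)
    (L : Fin s → T.Sh) (σ : Fin s → T.Aut) (gd : GlueData T L σ)
    (B : Type u) [Ring B] [Algebra k B]
    (𝒜 : (Fin s → ℕ) → Submodule k B) [GradedAlgebra 𝒜] : Type u where
  e : ∀ n : Fin s → ℕ, (𝒜 n) ≃ₗ[k] T.H0 (T.Psh L σ n)
  mul_compat : ∀ (m n : Fin s → ℕ) (a : 𝒜 m) (b : 𝒜 n),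
    e (m + n) ⟨(a : B) * (b : B), SetLike.mul_mem_graded a.2 b.2⟩ =
      T.twmul L σ gd.g m n (e m a) (e n b)

/-- `B` (with grading `𝒜`) is the twisted homogeneous coordinate ring
`B(X; L_σ) = ⊕_m H^0(X, L_σ^m)` with multiplication `a · b = a σ^m(b)`. -/
structure THCRing {k : Type u} [Field k] (T : TwGeom k) (L : T.Sh) (σ : T.Aut)
    (B : Type u) [Ring B] [Algebra k B]
    (𝒜 : ℕ → Submodule k B) [GradedAlgebra 𝒜] : Type u where
  e : ∀ n : ℕ, (𝒜 n) ≃ₗ[k] T.H0 ((T.bpow (L, σ) n).1)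
  g : ∀ m n : ℕ,
    T.H0 ((T.bpow (L, σ) m).1 * T.pull (σ ^ m) ((T.bpow (L, σ) n).1)) ≃ₗ[k]
      T.H0 ((T.bpow (L, σ) (m + n)).1)
  mul_compat : ∀ (m n : ℕ) (a : 𝒜 m) (b : 𝒜 n),
    e (m + n) ⟨(a : B) * (b : B), SetLike.mul_mem_graded a.2 b.2⟩ =
      g m n (T.h0mul _ _ (e m a) ((T.h0pull (σ ^ m) ((T.bpow (L, σ) n).1)) (e n b)))

/-- A morphism of projective schemes `f : X → Y` (where `T` encodes `X` and
`T'` encodes `Y`), recorded through its (monoidal) pullback on sheaves. -/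
structure GeomMap {k : Type u} [Field k] (T T' : TwGeom k) : Type u where
  pb : T'.Sh →* T.Sh

/-- Hypothesis (*) of Chan for the invertible bimodule `L_σ` on `X`:
there are a projective scheme `Y` with automorphism `σ'`, a `σ`-equivariant
morphism `f : X → Y`, and a `σ'`-ample invertible sheaf `L'` on `Y` with
`L = f^* L'`. -/
def HypStar {k : Type u} [Field k] (T : TwGeom k) (L : T.Sh) (σ : T.Aut) : Prop :=
  ∃ (T' : TwGeom k) (f : GeomMap T T') (σ' : T'.Aut) (L' : T'.Sh),
    (∀ F : T'.Sh, T.pull σ (f.pb F) = f.pb (T'.pull σ' F)) ∧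
    L = f.pb L' ∧ T'.SigmaAmple L' σ'

/-- Gelfand–Kirillov dimension of a `k`-algebra `R`:
`sup_V limsup_n log_n dim_k V^n` over finite-dimensional subspaces `V ⊆ R`. -/
noncomputable def GKdim (k : Type u) [Field k] (R : Type*) [Ring R] [Algebra k R] : ℝ≥0∞ :=
  ⨆ (V : Submodule k R) (_ : FiniteDimensional k V),
    Filter.limsup
      (fun n : ℕ => ENNReal.ofReal
        (Real.logb n (Module.finrank k ((V ^ n : Submodule k R) : Type _))))
      Filter.atTop

/-- Gelfand–Kirillov dimension of a right ideal `I` of `R`, viewed as a right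
`R`-module: `sup_{V,F} limsup_n log_n dim_k (F V^n)` over finite-dimensional
subspaces `V ⊆ R` and `F ⊆ I`. -/
noncomputable def GKdimRightIdeal (k : Type u) [Field k] (R : Type*) [Ring R]
    [Algebra k R] (I : Submodule k R) : ℝ≥0∞ :=
  ⨆ (V : Submodule k R) (_ : FiniteDimensional k V)
    (F : Submodule k R) (_ : F ≤ I) (_ : FiniteDimensional k F),
    Filter.limsup
      (fun n : ℕ => ENNReal.ofReal
        (Real.logb n (Module.finrank k ((F * V ^ n : Submodule k R) : Type _))))
      Filter.atTop

section Graded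

variable {k : Type u} [Field k] {B : Type u} [Ring B] [Algebra k B]

/-- The irrelevant ideal `B_{>0} = ⊕_{m>0} B_m` of an `ℕ`-graded algebra. -/
def irrelevantIdeal (𝒜 : ℕ → Submodule k B) : Submodule k B :=
  ⨆ m : {m : ℕ // 0 < m}, 𝒜 m

/-- `B_{≥ ī} = ⊕_{j̄ ≥ ī} B_{j̄}`. -/
def sectorIdeal {s : ℕ} (𝒜 : (Fin s → ℕ) → Submodule k B) (i : Fin s → ℕ) :
    Submodule k B :=
  ⨆ j : {j : Fin s → ℕ // i ≤ j}, 𝒜 j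

/-- The Rees algebra `B[It] = ⊕_r I^r t^r ⊆ B[t]` of a (two-sided) ideal,
given by its underlying `k`-subspace `I ⊆ B`. -/
def reesAlgebra' (I : Submodule k B) : Subalgebra k (Polynomial B) where
  carrier := {p | ∀ r : ℕ, p.coeff r ∈ I ^ r}
  add_mem' := fun {p q} hp hq r => by
    simpa [Polynomial.coeff_add] using add_mem (hp r) (hq r)
  zero_mem' := fun r => by simp
  mul_mem' := fun {p q} hp hq r => by
    rw [Polynomial.coeff_mul]
    refine Submodule.sum_mem _ ?_
    rintro ⟨i, j⟩ hij
    replace hij : i + j = r := by simpa using hij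
    have h := Submodule.mul_mem_mul (hp i) (hq j)
    rwa [← pow_add, hij] at h
  one_mem' := fun r => by
    rw [Polynomial.coeff_one]
    split
    · next h => subst h; rw [pow_zero]; exact Submodule.one_le.mp le_rfl
    · exact Submodule.zero_mem _
  algebraMap_mem' := fun c r => by
    rw [Polynomial.algebraMap_apply, Polynomial.coeff_C]
    split
    · next h => subst h; rw [pow_zero]; exact Submodule.algebraMap_mem c
    · exact Submodule.zero_mem _

/-- The multi-Veronese subring `B^{(n̄)} = ⊕_{ī} B_{(n_1 i_1, …, n_s i_s)}`. -/
def multiVeronese {s : ℕ} (𝒜 : (Fin s → ℕ) → Submodule k B) [GradedAlgebra 𝒜]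
    (n : Fin s → ℕ) : Subalgebra k B where
  carrier := (⨆ i : Fin s → ℕ, 𝒜 fun t => n t * i t : Submodule k B)
  add_mem' := fun ha hb => Submodule.add_mem _ ha hb
  zero_mem' := Submodule.zero_mem _
  mul_mem' := by
    intro a b ha hb
    have key : (⨆ i : Fin s → ℕ, 𝒜 fun t => n t * i t) *
        (⨆ i : Fin s → ℕ, 𝒜 fun t => n t * i t) ≤
        ⨆ i : Fin s → ℕ, 𝒜 fun t => n t * i t := by
      rw [Submodule.iSup_mul]
      refine iSup_le fun i => ?_
      rw [Submodule.mul_iSup]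
      refine iSup_le fun j => ?_
      refine le_trans (Submodule.mul_le.mpr ?_) (le_iSup _ (i + j))
      intro x hx y hy
      have hidx : (fun t => n t * (i + j) t) =
          ((fun t => n t * i t) + fun t => n t * j t : Fin s → ℕ) := by
        funext t
        simp [mul_add]
      rw [hidx]
      exact SetLike.mul_mem_graded hx hy
    exact key (Submodule.mul_mem_mul ha hb)
  one_mem' := by
    have h1 : (1 : B) ∈ 𝒜 fun t => n t * (0 : Fin s → ℕ) t := by
      have : (fun t => n t * (0 : Fin s → ℕ) t) = (0 : Fin s → ℕ) := by
        funext t; simp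
      rw [this]
      exact SetLike.one_mem_graded 𝒜
    exact Submodule.mem_iSup_of_mem 0 h1
  algebraMap_mem' := fun c => by
    have h1 : algebraMap k B c ∈ 𝒜 fun t => n t * (0 : Fin s → ℕ) t := by
      have : (fun t => n t * (0 : Fin s → ℕ) t) = (0 : Fin s → ℕ) := by
        funext t; simp
      rw [this, Algebra.algebraMap_eq_smul_one]
      exact Submodule.smul_mem _ c (SetLike.one_mem_graded 𝒜)
    exact Submodule.mem_iSup_of_mem 0 h1

end Graded

/-- A bundled twisted multi-homogeneous coordinate ring for the data
`(T, L, σ, gd)`. -/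
structure BundledTwRing {k : Type u} [Field k] {s : ℕ} (T : TwGeom k)
    (L : Fin s → T.Sh) (σ : Fin s → T.Aut) (gd : GlueData T L σ) : Type (u + 1) where
  B : Type u
  [ringB : Ring B]
  [algB : Algebra k B]
  𝒜 : (Fin s → ℕ) → Submodule k B
  [gradedB : GradedAlgebra 𝒜]
  ring : MTwRing T L σ gd B 𝒜

/-- Data exhibiting `XY` as the product `X × Y` of the projective schemes
encoded by `TX` and `TY`: the two projections and the pairing
`(σ, τ) ↦ σ × τ` of automorphisms. -/
structure ProdGeom {k : Type u} [Field k] (TX TY XY : TwGeom k) : Type u where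
  pr1 : GeomMap XY TX
  pr2 : GeomMap XY TY
  pairAut : TX.Aut → TY.Aut → XY.Aut
  pairAut_one : pairAut 1 1 = 1
  pairAut_mul : ∀ a b c d, pairAut (a * b) (c * d) = pairAut a c * pairAut b d
  pull_pair1 : ∀ a b F, XY.pull (pairAut a b) (pr1.pb F) = pr1.pb (TX.pull a F)
  pull_pair2 : ∀ a b F, XY.pull (pairAut a b) (pr2.pb F) = pr2.pb (TY.pull b F)

namespace TwGeom

variable {k : Type u} [Field k] (T : TwGeom k)

lemma pull_pull (a b : T.Aut) (F : T.Sh) :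
    T.pull b (T.pull a F) = T.pull (a * b) F := (T.pull_comp a b F).symm

lemma bmul_assoc (a b c : T.Bimod) :
    T.bmul (T.bmul a b) c = T.bmul a (T.bmul b c) := by
  simp [bmul, map_mul, T.pull_comp, mul_assoc]

lemma bone_bmul (a : T.Bimod) : T.bmul T.bone a = a := by
  simp [bmul, bone, T.pull_id]

lemma bmul_bone (a : T.Bimod) : T.bmul a T.bone = a := by
  simp [bmul, bone]

/-- The anti-automorphism `L_σ ↦ (L^{σ⁻¹})_{σ⁻¹}` of the bimodule monoid. -/
def bop (a : T.Bimod) : T.Bimod := (T.pull a.2⁻¹ a.1, a.2⁻¹)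

lemma bop_bone : T.bop T.bone = T.bone := by
  simp [bop, bone, T.pull_id]

lemma bop_bmul (a b : T.Bimod) :
    T.bop (T.bmul a b) = T.bmul (T.bop b) (T.bop a) := by
  have h1 : T.pull (a.2⁻¹ * b.2⁻¹) (T.pull a.2 b.1) = T.pull b.2⁻¹ b.1 := by
    rw [T.pull_comp, T.pull_pull a.2 a.2⁻¹, mul_inv_cancel, T.pull_id]
  have h2 : T.pull (a.2⁻¹ * b.2⁻¹) a.1 = T.pull b.2⁻¹ (T.pull a.2⁻¹ a.1) :=
    T.pull_comp _ _ _
  simp only [bop, bmul, map_mul, mul_inv_rev, h1, h2]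
  exact Prod.ext (mul_comm _ _) rfl

lemma bcomm_bone (a : T.Bimod) : T.bcomm a T.bone := by
  simp [bcomm, bone_bmul, bmul_bone]

lemma bcomm_bmul {x y z : T.Bimod} (h1 : T.bcomm x y) (h2 : T.bcomm x z) :
    T.bcomm x (T.bmul y z) := by
  unfold bcomm at *
  rw [← T.bmul_assoc, h1, T.bmul_assoc, h2, ← T.bmul_assoc]

lemma bcomm_bpow {x y : T.Bimod} (h : T.bcomm x y) (n : ℕ) :
    T.bcomm x (T.bpow y n) := by
  induction n with
  | zero => exact T.bcomm_bone x
  | succ n ih => exact T.bcomm_bmul h ih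

lemma bcomm_bpow_bpow {x y : T.Bimod} (h : T.bcomm x y) (m n : ℕ) :
    T.bcomm (T.bpow x m) (T.bpow y n) :=
  (T.bcomm_bpow (Eq.symm (T.bcomm_bpow h n)) m).symm

lemma bop_bpow (a : T.Bimod) (n : ℕ) :
    T.bpow (T.bop a) n = T.bop (T.bpow a n) := by
  induction n with
  | zero => exact T.bop_bone.symm
  | succ n ih =>
    show T.bmul (T.bop a) (T.bpow (T.bop a) n) = T.bop (T.bmul a (T.bpow a n))
    rw [ih, ← T.bop_bmul]
    congr 1
    exact (T.bcomm_bpow (rfl : T.bcomm a a) n).symm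

lemma bcomm_foldr {x : T.Bimod} {l : List T.Bimod}
    (h : ∀ y ∈ l, T.bcomm x y) : T.bcomm x (l.foldr T.bmul T.bone) := by
  induction l with
  | nil => exact T.bcomm_bone x
  | cons y l ih =>
    exact T.bcomm_bmul (h y (by simp)) (ih fun z hz => h z (by simp [hz]))

lemma bop_foldr (l : List T.Bimod) (h : ∀ x ∈ l, ∀ y ∈ l, T.bcomm x y) :
    (l.map T.bop).foldr T.bmul T.bone = T.bop (l.foldr T.bmul T.bone) := by
  induction l with
  | nil => simpa using T.bop_bone.symm
  | cons x l ih =>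
    simp only [List.map_cons, List.foldr_cons]
    rw [ih (fun a ha b hb => h a (by simp [ha]) b (by simp [hb])), ← T.bop_bmul]
    congr 1
    exact (T.bcomm_foldr (fun y hy => h x (by simp) y (by simp [hy]))).symm

lemma bfam_op {s : ℕ} (L : Fin s → T.Sh) (σ : Fin s → T.Aut)
    (hcomm : ∀ i j, T.bcomm (L i, σ i) (L j, σ j)) (m : Fin s → ℕ) :
    T.bfam (fun i => T.pull (σ i)⁻¹ (L i)) (fun i => (σ i)⁻¹) m
      = T.bop (T.bfam L σ m) := by
  unfold bfam
  have h1 : (List.ofFn fun i => T.bpow (T.pull (σ i)⁻¹ (L i), (σ i)⁻¹) (m i))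
      = (List.ofFn fun i => T.bpow (L i, σ i) (m i)).map T.bop := by
    rw [List.map_ofFn]
    congr 1
    funext i
    exact T.bop_bpow (L i, σ i) (m i)
  rw [h1, T.bop_foldr]
  intro x hx y hy
  rw [List.mem_ofFn] at hx hy
  obtain ⟨i, rfl⟩ := hx
  obtain ⟨j, rfl⟩ := hy
  exact T.bcomm_bpow_bpow (hcomm i j) _ _

end TwGeom

/-- **Lemma 2.2 of the paper.** Let `X` be a projective scheme over an
algebraically closed field with `s` pairwise commuting invertible bimodules
`(L_i)_{σ_i}`.  Then the set `{(L_i^{σ_i^{-1}})_{σ_i^{-1}}}` also commutes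
pairwise, and `{(L_i)_{σ_i}}` is right NC-ample iff
`{(L_i^{σ_i^{-1}})_{σ_i^{-1}}}` is left NC-ample. -/
theorem rightNCAmple_iff_leftNCAmple_of_inv {k : Type u} [Field k] [IsAlgClosed k]
    (T : TwGeom k) {s : ℕ} (L : Fin s → T.Sh) (σ : Fin s → T.Aut)
    (hcomm : ∀ i j, T.bcomm (L i, σ i) (L j, σ j)) :
    (∀ i j, T.bcomm (T.pull (σ i)⁻¹ (L i), (σ i)⁻¹)
        (T.pull (σ j)⁻¹ (L j), (σ j)⁻¹)) ∧
    (T.RightNCAmple L σ ↔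
      T.LeftNCAmple (fun i => T.pull (σ i)⁻¹ (L i)) fun i => (σ i)⁻¹) := by
  have key : ∀ (F : T.Sh) (m : Fin s → ℕ),
      T.leftTw (fun i => T.pull (σ i)⁻¹ (L i)) (fun i => (σ i)⁻¹) F m
        = T.rightTw L σ F m := by
    intro F m
    unfold TwGeom.leftTw TwGeom.rightTw TwGeom.Psh
    rw [T.bfam_op L σ hcomm m]
    show T.pull (T.bfam L σ m).2⁻¹ (T.bfam L σ m).1
        * T.pull (T.bfam L σ m).2⁻¹ F
      = T.pull ((T.bfam L σ m).2)⁻¹ (F * (T.bfam L σ m).1)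
    rw [map_mul, mul_comm]
  constructor
  · intro i j
    have h := congrArg T.bop (hcomm j i)
    rw [T.bop_bmul, T.bop_bmul] at h
    exact h
  · unfold TwGeom.RightNCAmple TwGeom.LeftNCAmple
    simp only [key]
end

section
/- Let B be a k-algebra graded by ℕ^s with each multi-graded piece finite dimensional over k. If B satisfies the ascending chain condition on multi-graded right ideals, then B is right noetherian. -/
/-!
An axiomatization of the geometric data used in the paper
"Noncommutative ampleness for multiple divisors" (D. Keeler):
a projective scheme `X` over an algebraically closed field `k`, encoded through
the commutative monoid of isomorphism classes of coherent sheaves under tensor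
product, pullback along automorphisms, sheaf cohomology dimensions, global
sections, ampleness notions, and numerical classes of invertible sheaves.
-/

open scoped ENNReal TensorProduct

universe u

/-! ### Auxiliary machinery for Lemma 4.4(1): leading terms with respect to the
lexicographic well-order on `ℕ^s`. -/

instance wellFoundedLTFin (s : ℕ) : WellFoundedLT (Fin s) := Finite.to_wellFoundedLT

section LeadAux

variable {k : Type*} [Field k] {s : ℕ} {B : Type*} [Ring B] [Algebra k B]
  (𝒜 : (Fin s → ℕ) → Submodule k B) [GradedAlgebra 𝒜]

/-- The component of `x` in degree `n`. -/
noncomputable def gcomp (x : B) (n : Fin s → ℕ) : B := (DirectSum.decompose 𝒜 x n : B)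

/-- `y` is the leading (lex-highest) nonzero homogeneous component of `x`, in degree `d`. -/
def GIsLead (x : B) (d : Fin s → ℕ) (y : B) : Prop :=
  gcomp 𝒜 x d = y ∧ y ≠ 0 ∧ ∀ e : Fin s → ℕ, toLex d < toLex e → gcomp 𝒜 x e = 0

theorem exists_gIsLead {x : B} (hx : x ≠ 0) : ∃ d y, GIsLead 𝒜 x d y := by
  classical
  set D := DirectSum.decompose 𝒜 x with hD
  have hsupp : D.support.Nonempty := by
    rcases Finset.eq_empty_or_nonempty D.support with h | h
    · exfalso; apply hx
      have := DirectSum.sum_support_decompose 𝒜 x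
      rw [← this, ← hD, h, Finset.sum_empty]
    · exact h
  obtain ⟨d, hd, hmax⟩ := D.support.exists_max_image (fun n => toLex n) hsupp
  refine ⟨d, gcomp 𝒜 x d, rfl, ?_, ?_⟩
  · simpa [gcomp, hD] using DFinsupp.mem_support_iff.mp hd
  · intro e he
    by_contra h0
    have : e ∈ D.support := DFinsupp.mem_support_iff.mpr (by simpa [gcomp, hD] using h0)
    exact absurd (hmax e this) (not_le_of_gt he)

theorem gcomp_add (x y : B) (n : Fin s → ℕ) :
    gcomp 𝒜 (x + y) n = gcomp 𝒜 x n + gcomp 𝒜 y n := by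
  unfold gcomp; rw [DirectSum.decompose_add]; rfl

theorem gcomp_zero (n : Fin s → ℕ) : gcomp 𝒜 (0 : B) n = 0 := by
  unfold gcomp; rw [DirectSum.decompose_zero]; rfl

theorem gcomp_smul (c : k) (x : B) (n : Fin s → ℕ) :
    gcomp 𝒜 (c • x) n = c • gcomp 𝒜 x n := by
  unfold gcomp; rw [DirectSum.decompose_smul]; rfl

theorem gcomp_sub (x y : B) (n : Fin s → ℕ) :
    gcomp 𝒜 (x - y) n = gcomp 𝒜 x n - gcomp 𝒜 y n := by
  have : x - y = x + (-1 : k) • y := by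
    rw [neg_one_smul, sub_eq_add_neg]
  rw [this, gcomp_add, gcomp_smul, neg_one_smul, ← sub_eq_add_neg]

theorem gcomp_mul_homog (x : B) {b : B} {m : Fin s → ℕ} (hb : b ∈ 𝒜 m) (n : Fin s → ℕ) :
    gcomp 𝒜 (x * b) (n + m) = gcomp 𝒜 x n * b := by
  induction x using DirectSum.Decomposition.inductionOn 𝒜 with
  | zero => simp [gcomp]
  | @homogeneous p z =>
      obtain ⟨z, hz⟩ := z
      by_cases hpn : p = n
      · subst hpn
        rw [gcomp, gcomp, DirectSum.decompose_of_mem_same 𝒜 hz,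
          DirectSum.decompose_of_mem_same 𝒜 (SetLike.mul_mem_graded hz hb)]
      · rw [gcomp, gcomp, DirectSum.decompose_of_mem_ne 𝒜 hz hpn,
          DirectSum.decompose_of_mem_ne 𝒜 (SetLike.mul_mem_graded hz hb)
            (fun h => hpn (by funext i; have := congrFun h i; simpa using this)),
          zero_mul]
  | add z w hz hw =>
      rw [add_mul, gcomp_add, hz, hw, gcomp_add, add_mul]

theorem gcomp_mul_homog_notmem (x : B) {b : B} {m : Fin s → ℕ} (hb : b ∈ 𝒜 m)
    {e : Fin s → ℕ} (he : ∀ n : Fin s → ℕ, e ≠ n + m) :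
    gcomp 𝒜 (x * b) e = 0 := by
  induction x using DirectSum.Decomposition.inductionOn 𝒜 with
  | zero => simp [gcomp]
  | @homogeneous p z =>
      obtain ⟨z, hz⟩ := z
      rw [gcomp, DirectSum.decompose_of_mem_ne 𝒜 (SetLike.mul_mem_graded hz hb)
        (fun h => he p h.symm)]
  | add z w hz hw =>
      rw [add_mul, gcomp_add, hz, hw, add_zero]

theorem gIsLead_mul {x y : B} {d : Fin s → ℕ} (h : GIsLead 𝒜 x d y)
    {b : B} {m : Fin s → ℕ} (hb : b ∈ 𝒜 m) (hyb : y * b ≠ 0) :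
    GIsLead 𝒜 (x * b) (d + m) (y * b) := by
  obtain ⟨hyd, hy0, hvan⟩ := h
  refine ⟨by rw [gcomp_mul_homog 𝒜 x hb, hyd], hyb, ?_⟩
  intro e he
  by_cases hex : ∃ n : Fin s → ℕ, e = n + m
  · obtain ⟨n, rfl⟩ := hex
    rw [gcomp_mul_homog 𝒜 x hb]
    have hdn : toLex d < toLex n := by
      have : toLex (d + m) < toLex (n + m) := he
      exact lt_of_add_lt_add_right this
    rw [hvan n hdn, zero_mul]
  · exact gcomp_mul_homog_notmem 𝒜 x hb (fun n h => hex ⟨n, h⟩)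

/-- The span of the leading components of elements of `J`. -/
noncomputable def leadSpan (J : Set B) : Submodule k B :=
  Submodule.span k {y | ∃ x ∈ J, ∃ d, GIsLead 𝒜 x d y}

theorem leadSpan_mono {J J' : Set B} (h : J ⊆ J') : leadSpan 𝒜 J ≤ leadSpan 𝒜 J' := by
  apply Submodule.span_mono
  rintro y ⟨x, hx, d, hl⟩
  exact ⟨x, h hx, d, hl⟩

theorem leadSpan_mul_mem {J : Set B} (hmulr : ∀ x ∈ J, ∀ b : B, x * b ∈ J)
    {y : B} (hy : y ∈ leadSpan 𝒜 J) (b : B) : y * b ∈ leadSpan 𝒜 J := by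
  classical
  induction hy using Submodule.span_induction with
  | mem y hy =>
      obtain ⟨x, hxJ, d, hl⟩ := hy
      have hb : y * b = ∑ m ∈ (DirectSum.decompose 𝒜 b).support,
          y * (DirectSum.decompose 𝒜 b m : B) := by
        rw [← Finset.mul_sum, DirectSum.sum_support_decompose]
      rw [hb]
      refine Submodule.sum_mem _ fun m _ => ?_
      by_cases h0 : y * (DirectSum.decompose 𝒜 b m : B) = 0
      · rw [h0]; exact Submodule.zero_mem _
      · refine Submodule.subset_span ?_
        exact ⟨x * (DirectSum.decompose 𝒜 b m : B), hmulr x hxJ _, d + m,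
          gIsLead_mul 𝒜 hl (SetLike.coe_mem _) h0⟩
  | zero => rw [zero_mul]; exact Submodule.zero_mem _
  | add u v _ _ hu hv => rw [add_mul]; exact Submodule.add_mem _ hu hv
  | smul c u _ hu => rw [smul_mul_assoc]; exact Submodule.smul_mem _ _ hu

theorem leadSpan_comp_mem {J : Set B} {y : B} (hy : y ∈ leadSpan 𝒜 J) (n : Fin s → ℕ) :
    gcomp 𝒜 y n ∈ leadSpan 𝒜 J := by
  induction hy using Submodule.span_induction with
  | mem y hy =>
      obtain ⟨x, hxJ, d, hl⟩ := hy
      have hyd : y ∈ 𝒜 d := by rw [← hl.1]; exact SetLike.coe_mem _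
      by_cases hnd : n = d
      · subst hnd
        rw [gcomp, DirectSum.decompose_of_mem_same 𝒜 hyd]
        exact Submodule.subset_span ⟨x, hxJ, n, hl⟩
      · rw [gcomp, DirectSum.decompose_of_mem_ne 𝒜 hyd (Ne.symm hnd)]
        exact Submodule.zero_mem _
  | zero => rw [gcomp_zero]; exact Submodule.zero_mem _
  | add u v _ _ hu hv => rw [gcomp_add]; exact Submodule.add_mem _ hu hv
  | smul c u _ hu => rw [gcomp_smul]; exact Submodule.smul_mem _ _ hu

/-- Key lemma: of two nested right ideals with the same leading-term module,
the smaller contains the larger. -/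
theorem subset_of_leadSpan_le {J J' : Set B}
    (hJ0 : (0 : B) ∈ J) (hJadd : ∀ a ∈ J, ∀ b ∈ J, a + b ∈ J)
    (hJsmul : ∀ (c : k), ∀ a ∈ J, c • a ∈ J)
    (hJ'sub : ∀ a ∈ J', ∀ b ∈ J', a - b ∈ J')
    (hsub : J ⊆ J') (hlead : leadSpan 𝒜 J' ≤ leadSpan 𝒜 J) : J' ⊆ J := by
  by_contra hne
  rw [Set.not_subset] at hne
  have hSne : {e : Lex (Fin s → ℕ) |
      ∃ x, x ∈ J' ∧ x ∉ J ∧ ∃ y, GIsLead 𝒜 x (ofLex e) y}.Nonempty := by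
    obtain ⟨x, hx', hx⟩ := hne
    have hx0 : x ≠ 0 := fun h => hx (h ▸ hJ0)
    obtain ⟨d, y, hl⟩ := exists_gIsLead 𝒜 hx0
    exact ⟨toLex d, x, hx', hx, y, hl⟩
  obtain ⟨e₀, ⟨x, hxJ', hxJ, y, hl⟩, hmin⟩ :=
    (wellFounded_lt (α := Lex (Fin s → ℕ))).has_min _ hSne
  set d : Fin s → ℕ := ofLex e₀ with hd
  have hy : y ∈ leadSpan 𝒜 J := hlead (Submodule.subset_span ⟨x, hxJ', d, hl⟩)
  have hyd : y ∈ 𝒜 d := by rw [← hl.1]; exact SetLike.coe_mem _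
  have hz : ∃ z, z ∈ J ∧ gcomp 𝒜 z d = gcomp 𝒜 y d ∧
      ∀ e : Fin s → ℕ, toLex d < toLex e → gcomp 𝒜 z e = 0 := by
    clear hyd hl hxJ hxJ' hmin
    induction hy using Submodule.span_induction with
    | mem w hw =>
        obtain ⟨x', hx', d', hl'⟩ := hw
        have hwd' : w ∈ 𝒜 d' := by rw [← hl'.1]; exact SetLike.coe_mem _
        by_cases hdd : d' = d
        · refine ⟨x', hx', ?_, fun e he => hl'.2.2 e (hdd ▸ he)⟩
          rw [← hdd, hl'.1, gcomp, DirectSum.decompose_of_mem_same 𝒜 hwd']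
        · refine ⟨0, hJ0, ?_, fun e _ => gcomp_zero 𝒜 e⟩
          rw [gcomp_zero, gcomp, DirectSum.decompose_of_mem_ne 𝒜 hwd' hdd]
    | zero => exact ⟨0, hJ0, rfl, fun e _ => gcomp_zero 𝒜 e⟩
    | add u v _ _ hu hv =>
        obtain ⟨z1, hz1, hz1d, hz1v⟩ := hu
        obtain ⟨z2, hz2, hz2d, hz2v⟩ := hv
        exact ⟨z1 + z2, hJadd _ hz1 _ hz2,
          by rw [gcomp_add, gcomp_add, hz1d, hz2d],
          fun e he => by rw [gcomp_add, hz1v e he, hz2v e he, add_zero]⟩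
    | smul c u _ hu =>
        obtain ⟨z, hzJ, hzd, hzv⟩ := hu
        exact ⟨c • z, hJsmul c _ hzJ, by rw [gcomp_smul, gcomp_smul, hzd],
          fun e he => by rw [gcomp_smul, hzv e he, smul_zero]⟩
  obtain ⟨z, hzJ, hzd, hzv⟩ := hz
  have hzdy : gcomp 𝒜 z d = y := by
    rw [hzd, gcomp, DirectSum.decompose_of_mem_same 𝒜 hyd]
  have hxz' : x - z ∈ J' := hJ'sub x hxJ' z (hsub hzJ)
  have hxzJ : x - z ∉ J := fun h => hxJ (by
    have := hJadd _ h _ hzJ; rwa [sub_add_cancel] at this)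
  have hxz0 : x - z ≠ 0 := fun h => hxzJ (by rw [h]; exact hJ0)
  obtain ⟨d'', y'', hl''⟩ := exists_gIsLead 𝒜 hxz0
  have hvanish : ∀ e : Fin s → ℕ, toLex d ≤ toLex e → gcomp 𝒜 (x - z) e = 0 := by
    intro e he
    rcases eq_or_lt_of_le he with heq | hlt
    · have : d = e := congrArg (ofLex (α := Fin s → ℕ)) heq
      subst this
      rw [gcomp_sub, hl.1, hzdy, sub_self]
    · rw [gcomp_sub, hl.2.2 e hlt, hzv e hlt, sub_zero]
  have hdd : toLex d'' < toLex d := by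
    by_contra hge
    replace hge : toLex d ≤ toLex d'' := not_lt.mp hge
    exact hl''.2.1 (by rw [← hl''.1]; exact hvanish d'' hge)
  exact hmin (toLex d'') ⟨x - z, hxz', hxzJ, y'', hl''⟩ hdd

end LeadAux

/-- **Lemma 4.4(1) of the paper.** Let `B` be a `k`-algebra, finitely
multi-graded by `ℕ^s`.  If `B` has the ascending chain condition on
multi-graded right ideals, then `B` is right noetherian. -/
theorem rightNoetherian_of_acc_multiGraded {k : Type u} [Field k] {s : ℕ}
    (B : Type u) [Ring B] [Algebra k B]
    (𝒜 : (Fin s → ℕ) → Submodule k B) [GradedAlgebra 𝒜]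
    (hfin : ∀ n : Fin s → ℕ, FiniteDimensional k (𝒜 n))
    (hacc : ∀ f : ℕ → Submodule k B, Monotone f →
      (∀ t : ℕ, (∀ x ∈ f t, ∀ b : B, x * b ∈ f t) ∧
        ∀ x ∈ f t, ∀ n : Fin s → ℕ, (DirectSum.decompose 𝒜 x n : B) ∈ f t) →
      ∃ N : ℕ, ∀ t : ℕ, N ≤ t → f t = f N) :
    IsNoetherianRing Bᵐᵒᵖ := by
  classical
  rw [isNoetherianRing_iff, ← monotone_stabilizes_iff_noetherian]
  intro F
  set Jset : ℕ → Set B := fun t => {b : B | MulOpposite.op b ∈ F t} with hJset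
  have hmulr : ∀ t, ∀ x ∈ Jset t, ∀ b : B, x * b ∈ Jset t := by
    intro t x hx b
    show MulOpposite.op (x * b) ∈ F t
    rw [MulOpposite.op_mul, ← smul_eq_mul]
    exact Submodule.smul_mem _ _ hx
  have h0 : ∀ t, (0 : B) ∈ Jset t := fun t => by
    show MulOpposite.op (0 : B) ∈ F t
    rw [MulOpposite.op_zero]; exact Submodule.zero_mem _
  have hadd : ∀ t, ∀ a ∈ Jset t, ∀ b ∈ Jset t, a + b ∈ Jset t := by
    intro t a ha b hb
    show MulOpposite.op (a + b) ∈ F t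
    rw [MulOpposite.op_add]; exact Submodule.add_mem _ ha hb
  have hsmul : ∀ t, ∀ (c : k), ∀ a ∈ Jset t, c • a ∈ Jset t := by
    intro t c a ha
    have hca : c • a = a * algebraMap k B c := by
      rw [Algebra.smul_def, Algebra.commutes]
    rw [hca]; exact hmulr t a ha _
  have hsubc : ∀ t, ∀ a ∈ Jset t, ∀ b ∈ Jset t, a - b ∈ Jset t := by
    intro t a ha b hb
    show MulOpposite.op (a - b) ∈ F t
    rw [MulOpposite.op_sub]; exact Submodule.sub_mem _ ha hb
  have hJmono : ∀ {a b : ℕ}, a ≤ b → Jset a ⊆ Jset b := by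
    intro a b hab x hx
    exact F.monotone hab hx
  obtain ⟨N, hN⟩ := hacc (fun t => leadSpan 𝒜 (Jset t))
    (fun a b hab => leadSpan_mono 𝒜 (hJmono hab))
    (fun t => ⟨fun x hx b => leadSpan_mul_mem 𝒜 (hmulr t) hx b,
      fun x hx n => leadSpan_comp_mem 𝒜 hx n⟩)
  refine ⟨N, fun t ht => ?_⟩
  refine le_antisymm (F.monotone ht) ?_
  have hkey : Jset t ⊆ Jset N :=
    subset_of_leadSpan_le 𝒜 (h0 N) (hadd N) (hsmul N) (hsubc t)
      (hJmono ht) (le_of_eq (hN t ht))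
  intro w hw
  have hw' : MulOpposite.unop w ∈ Jset t := by
    show MulOpposite.op (MulOpposite.unop w) ∈ F t
    rwa [MulOpposite.op_unop]
  have hmem := hkey hw'
  show w ∈ F N
  rw [← MulOpposite.op_unop w]
  exact hmem
end

section
/- Let B be a k-algebra finitely multi-graded by ℕ^s. If B is right noetherian, then for any (n_1,…,n_s) ∈ ℕ^s the multi-Veronese subring B^{(n_1,…,n_s)} = ⊕_{(i_1,…,i_s) ∈ ℕ^s} B_{(n_1 i_1,…,n_s i_s)} is right noetherian. -/
/-!
An axiomatization of the geometric data used in the paper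
"Noncommutative ampleness for multiple divisors" (D. Keeler):
a projective scheme `X` over an algebraically closed field `k`, encoded through
the commutative monoid of isomorphism classes of coherent sheaves under tensor
product, pullback along automorphisms, sheaf cohomology dimensions, global
sections, ampleness notions, and numerical classes of invertible sheaves.
-/

open scoped ENNReal TensorProduct

universe u

/-- **Lemma 4.4(2) of the paper.** Let `B` be a `k`-algebra, finitely
multi-graded by `ℕ^s`.  If `B` is right noetherian, then every multi-Veronese
subring `B^{(n_1,…,n_s)}` is right noetherian. -/
theorem multiVeronese_rightNoetherian {k : Type u} [Field k] {s : ℕ}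
    (B : Type u) [Ring B] [Algebra k B]
    (𝒜 : (Fin s → ℕ) → Submodule k B) [GradedAlgebra 𝒜]
    (hfin : ∀ n : Fin s → ℕ, FiniteDimensional k (𝒜 n))
    (hnoeth : IsNoetherianRing Bᵐᵒᵖ) (n : Fin s → ℕ) :
    IsNoetherianRing (↥(multiVeronese 𝒜 n))ᵐᵒᵖ := by
  classical
  set V := multiVeronese 𝒜 n with hVdef
  -- each lattice piece is contained in V
  have hle : ∀ d : Fin s → ℕ, (∀ t, n t ∣ d t) → 𝒜 d ≤ Subalgebra.toSubmodule V := by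
    intro d hd x hx
    have hfun : (fun t => n t * (d t / n t)) = d := funext fun t => Nat.mul_div_cancel' (hd t)
    have : x ∈ ⨆ i : Fin s → ℕ, 𝒜 fun t => n t * i t :=
      Submodule.mem_iSup_of_mem (fun t => d t / n t) (by rw [hfun]; exact hx)
    exact this
  let comps : ∀ d : Fin s → ℕ, (𝒜 d) →ₗ[k] Subalgebra.toSubmodule V := fun d =>
    if h : ∀ t, n t ∣ d t then Submodule.inclusion (hle d h) else 0
  let π : B →ₗ[k] B :=
    (Subalgebra.toSubmodule V).subtype ∘ₗ
      (DirectSum.toModule k (Fin s → ℕ) (Subalgebra.toSubmodule V) comps) ∘ₗ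
      (DirectSum.decomposeAlgEquiv 𝒜).toLinearMap
  have hπmem : ∀ x : B, π x ∈ V := by
    intro x
    exact ((DirectSum.toModule k (Fin s → ℕ) (Subalgebra.toSubmodule V) comps)
      ((DirectSum.decomposeAlgEquiv 𝒜) x)).2
  -- value on homogeneous elements
  have hA : ∀ (d : Fin s → ℕ) (x : B), x ∈ 𝒜 d →
      π x = if ∀ t, n t ∣ d t then x else 0 := by
    intro d x hx
    have h1 : (DirectSum.decomposeAlgEquiv 𝒜) x
        = DirectSum.lof k (Fin s → ℕ) (fun i => 𝒜 i) d ⟨x, hx⟩ := by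
      rw [DirectSum.lof_eq_of]
      exact DirectSum.decompose_coe 𝒜 (⟨x, hx⟩ : 𝒜 d)
    show (Subalgebra.toSubmodule V).subtype
      ((DirectSum.toModule k (Fin s → ℕ) (Subalgebra.toSubmodule V) comps)
        ((DirectSum.decomposeAlgEquiv 𝒜) x)) = _
    rw [h1, DirectSum.toModule_lof]
    by_cases h : ∀ t, n t ∣ d t
    · rw [if_pos h]
      simp [comps, dif_pos h, Submodule.inclusion]
    · rw [if_neg h]
      simp [comps, dif_neg h]
  -- π fixes V
  have hB : ∀ x ∈ V, π x = x := by
    intro x hx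
    have hiSup : (⨆ i : Fin s → ℕ, 𝒜 fun t => n t * i t) ≤
        LinearMap.eqLocus π LinearMap.id := by
      refine iSup_le fun i => ?_
      intro y hy
      have hy' := hA _ y hy
      rw [if_pos (fun t => dvd_mul_right (n t) (i t))] at hy'
      rw [LinearMap.mem_eqLocus]
      exact hy'
    simpa using LinearMap.mem_eqLocus.mp (hiSup hx)
  have htop : (⨆ i : Fin s → ℕ, 𝒜 i) = (⊤ : Submodule k B) :=
    (DirectSum.Decomposition.isInternal 𝒜).submodule_iSup_eq_top
  -- module property: π (a * x) = a * π x  for a ∈ V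
  have hC1 : ∀ (i : Fin s → ℕ) (a : B), a ∈ 𝒜 (fun t => n t * i t) →
      ∀ (e : Fin s → ℕ) (x : B), x ∈ 𝒜 e → π (a * x) = a * π x := by
    intro i a ha e x hx
    have hmul : a * x ∈ 𝒜 ((fun t => n t * i t) + e) := SetLike.mul_mem_graded ha hx
    rw [hA _ _ hmul, hA _ _ hx]
    have hiff : (∀ t, n t ∣ ((fun t => n t * i t) + e) t) ↔ ∀ t, n t ∣ e t := by
      constructor
      · intro h t
        have h' := h t
        simp only [Pi.add_apply] at h'
        exact (Nat.dvd_add_right (dvd_mul_right (n t) (i t))).mp h'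
      · intro h t
        show n t ∣ n t * i t + e t
        exact (Nat.dvd_add_right (dvd_mul_right (n t) (i t))).mpr (h t)
    by_cases h : ∀ t, n t ∣ e t
    · rw [if_pos (hiff.mpr h), if_pos h]
    · rw [if_neg (fun hc => h (hiff.mp hc)), if_neg h, mul_zero]
  have hC2 : ∀ (i : Fin s → ℕ) (a : B), a ∈ 𝒜 (fun t => n t * i t) →
      ∀ x : B, π (a * x) = a * π x := by
    intro i a ha x
    have hsub : (⨆ e : Fin s → ℕ, 𝒜 e) ≤
        LinearMap.eqLocus (π ∘ₗ LinearMap.mulLeft k a) (LinearMap.mulLeft k a ∘ₗ π) := by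
      refine iSup_le fun e => ?_
      intro y hy
      rw [LinearMap.mem_eqLocus]
      simpa using hC1 i a ha e y hy
    rw [htop] at hsub
    have hx : x ∈ LinearMap.eqLocus (π ∘ₗ LinearMap.mulLeft k a) (LinearMap.mulLeft k a ∘ₗ π) :=
      hsub Submodule.mem_top
    simpa using LinearMap.mem_eqLocus.mp hx
  have hC : ∀ (a : B), a ∈ V → ∀ x : B, π (a * x) = a * π x := by
    intro a ha x
    have hsub : (⨆ i : Fin s → ℕ, 𝒜 fun t => n t * i t) ≤
        LinearMap.eqLocus (π ∘ₗ LinearMap.mulRight k x) (LinearMap.mulRight k (π x) ) := by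
      refine iSup_le fun i => ?_
      intro y hy
      rw [LinearMap.mem_eqLocus]
      simpa using hC2 i y hy x
    simpa using LinearMap.mem_eqLocus.mp (hsub ha)
  -- the embedding of right-ideal lattices
  let ι : (↥V)ᵐᵒᵖ →+* Bᵐᵒᵖ := RingHom.op V.val.toRingHom
  have hι : ∀ y : (↥V)ᵐᵒᵖ, ι y = MulOpposite.op ((y.unop : B)) := fun y => rfl
  have hιinj : Function.Injective ι := by
    intro a b h
    rw [hι, hι] at h
    exact MulOpposite.unop_injective (Subtype.coe_injective (MulOpposite.op_injective h))
  have hkey : ∀ J : Ideal (↥V)ᵐᵒᵖ, Ideal.comap ι (Ideal.map ι J) ≤ J := by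
    intro J y hy
    have hy' : ι y ∈ Submodule.span Bᵐᵒᵖ (ι '' (J : Set (↥V)ᵐᵒᵖ)) := hy
    have main : ∀ (c : Bᵐᵒᵖ), c ∈ Submodule.span Bᵐᵒᵖ (ι '' (J : Set (↥V)ᵐᵒᵖ)) →
        ∀ b : B, MulOpposite.op (⟨π (MulOpposite.unop c * b), hπmem _⟩ : ↥V) ∈ J := by
      intro c hc
      refine Submodule.span_induction ?_ ?_ ?_ ?_ hc
      · rintro z ⟨j, hj, rfl⟩ b
        have h1 : π (MulOpposite.unop (ι j) * b) = (j.unop : B) * π b := hC _ (j.unop).2 b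
        have h2 : (⟨π (MulOpposite.unop (ι j) * b), hπmem _⟩ : ↥V)
            = j.unop * ⟨π b, hπmem b⟩ := Subtype.ext h1
        rw [h2, MulOpposite.op_mul, MulOpposite.op_unop]
        exact J.mul_mem_left _ hj
      · intro b
        have h2 : (⟨π (MulOpposite.unop (0 : Bᵐᵒᵖ) * b), hπmem _⟩ : ↥V) = 0 :=
          Subtype.ext (by simp)
        rw [h2, MulOpposite.op_zero]
        exact J.zero_mem
      · intro z w hz hw ihz ihw b
        have h2 : (⟨π (MulOpposite.unop (z + w) * b), hπmem _⟩ : ↥V)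
            = ⟨π (MulOpposite.unop z * b), hπmem _⟩ + ⟨π (MulOpposite.unop w * b), hπmem _⟩ :=
          Subtype.ext (by simp [add_mul])
        rw [h2, MulOpposite.op_add]
        exact J.add_mem (ihz b) (ihw b)
      · intro r z hz ih b
        have h2 : (⟨π (MulOpposite.unop (r • z) * b), hπmem _⟩ : ↥V)
            = ⟨π (MulOpposite.unop z * (MulOpposite.unop r * b)), hπmem _⟩ :=
          Subtype.ext (by simp [smul_eq_mul, mul_assoc])
        rw [h2]
        exact ih (MulOpposite.unop r * b)
    have hmem := main (ι y) hy' 1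
    have h3 : (⟨π (MulOpposite.unop (ι y) * 1), hπmem _⟩ : ↥V) = y.unop := by
      refine Subtype.ext ?_
      show π ((y.unop : B) * 1) = (y.unop : B)
      rw [mul_one]
      exact hB _ (y.unop).2
    rw [h3, MulOpposite.op_unop] at hmem
    exact hmem
  have hιmapinj : Function.Injective (Ideal.map ι : Ideal (↥V)ᵐᵒᵖ → Ideal Bᵐᵒᵖ) := by
    intro J1 J2 h
    refine le_antisymm ?_ ?_
    · exact le_trans Ideal.le_comap_map (by rw [h]; exact hkey J2)
    · exact le_trans Ideal.le_comap_map (by rw [← h]; exact hkey J1)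
  let emb : ((· > ·) : Ideal (↥V)ᵐᵒᵖ → Ideal (↥V)ᵐᵒᵖ → Prop) ↪r
      ((· > ·) : Ideal Bᵐᵒᵖ → Ideal Bᵐᵒᵖ → Prop) :=
    { toFun := Ideal.map ι
      inj' := hιmapinj
      map_rel_iff' := by
        intro J1 J2
        constructor
        · intro h
          have hle2 : J2 ≤ J1 :=
            le_trans Ideal.le_comap_map
              (le_trans (Ideal.comap_mono (le_of_lt h)) (hkey J1))
          exact lt_of_le_of_ne hle2 fun he => (ne_of_lt h) (by rw [he])
        · intro h
          exact lt_of_le_of_ne (Ideal.map_mono (le_of_lt h))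
            fun he => (ne_of_lt h) (hιmapinj he.symm).symm }
  have hwfB : WellFounded ((· > ·) : Ideal Bᵐᵒᵖ → Ideal Bᵐᵒᵖ → Prop) :=
    (isNoetherian_iff.mp (isNoetherianRing_iff.mp hnoeth))
  exact isNoetherianRing_iff.mpr (isNoetherian_iff.mpr (emb.wellFounded hwfB))
end
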